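/- arXiv:2005.10496 — 4 statements merged into one kernel-verified Lean document; each statement's English description precedes it below -/
import Mathlib

section
/- Let p : E ⥤ D be a functor, u : i ⟶ j a morphism of D, and f : x' ⟶ x a morphism of E with p f = 𝟙 j. Suppose φ' : z' ⟶ x' and φ : z ⟶ x are p-cartesian morphisms over u, and let f̄ : z' ⟶ z be the unique morphism with p f̄ = 𝟙 i and f̄ ≫ φ = φ' ≫ f (which exists by cartesianness of φ). Then the commuting square with sides f̄ : z' ⟶ z, φ' : z' ⟶ x', φ : z ⟶ x, f : x' ⟶ x is a pullback square in E. -/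
open CategoryTheory Limits

/-- `φ` is a (strongly) cartesian morphism over `u : i ⟶ j` for the functor `p`. -/
def IsCart {E D : Type*} [Category E] [Category D] (p : E ⥤ D) {i j : D} (u : i ⟶ j)
    {z x : E} (φ : z ⟶ x) : Prop :=
  p.IsHomLift u φ ∧
    ∀ ⦃i' : D⦄ (v : i' ⟶ i) ⦃w : E⦄ (ψ : w ⟶ x), p.IsHomLift (v ≫ u) ψ →
      ∃! χ : w ⟶ z, p.IsHomLift v χ ∧ χ ≫ φ = ψ

/-- **Squares of cartesian lifts are pullback squares in the total category.**
Let `u : i ⟶ j` be a morphism of `D`, `f : x' ⟶ x` a vertical morphism of `E`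
(lying over `𝟙 j`), and let `φ' : z' ⟶ x'`, `φ : z ⟶ x` be `p`-cartesian morphisms over
`u`.  If `fbar : z' ⟶ z` is the (unique) morphism lying over `𝟙 i` with `fbar ≫ φ = φ' ≫ f`,
then the square with sides `fbar`, `φ'`, `φ`, `f` is a pullback square in `E`. -/
theorem cartesian_lift_square_isPullback {E D : Type*} [Category E] [Category D]
    (p : E ⥤ D) {i j : D} (u : i ⟶ j) {x' x z' z : E}
    (f : x' ⟶ x) (hf : p.IsHomLift (𝟙 j) f)
    (φ' : z' ⟶ x') (φ : z ⟶ x)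
    (hφ' : IsCart p u φ') (hφ : IsCart p u φ)
    (fbar : z' ⟶ z) (hfbar : p.IsHomLift (𝟙 i) fbar)
    (hcomm : fbar ≫ φ = φ' ≫ f) :
    IsPullback fbar φ' φ f := by
  haveI := hφ'.1; haveI := hφ.1; haveI := hf; haveI := hfbar
  have hz : p.obj z = i := IsHomLift.domain_eq p u φ
  have hz' : p.obj z' = i := IsHomLift.domain_eq p u φ'
  have hx : p.obj x = j := IsHomLift.codomain_eq p u φ
  have hx' : p.obj x' = j := IsHomLift.codomain_eq p u φ'
  have hφmap : p.map φ = eqToHom hz ≫ u ≫ eqToHom hx.symm := IsHomLift.fac' p u φ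
  have hfmap : p.map f = eqToHom hx' ≫ 𝟙 j ≫ eqToHom hx.symm := IsHomLift.fac' p (𝟙 j) f
  have hfbarmap : p.map fbar = eqToHom hz' ≫ 𝟙 i ≫ eqToHom hz.symm :=
    IsHomLift.fac' p (𝟙 i) fbar
  have hk : ∀ s : PullbackCone φ f, p.IsHomLift ((p.map s.fst ≫ eqToHom hz) ≫ u) s.snd := by
    intro s
    have h1 := congrArg p.map s.condition
    simp only [Functor.map_comp, hφmap, hfmap] at h1
    have h2 := congrArg (fun t => t ≫ eqToHom hx) h1
    simp only [Category.assoc, eqToHom_trans, eqToHom_refl, Category.comp_id,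
      Category.id_comp] at h2
    apply IsHomLift.of_fac p _ s.snd rfl hx'
    simp [← h2]
  refine IsPullback.of_isLimit' ⟨hcomm⟩ (PullbackCone.IsLimit.mk hcomm
    (fun s => (hφ'.2 (p.map s.fst ≫ eqToHom hz) s.snd (hk s)).exists.choose) ?_ ?_ ?_)
  · -- fac₁ : lift ≫ fbar = s.fst
    intro s
    obtain ⟨hχlift, hχfac⟩ := (hφ'.2 (p.map s.fst ≫ eqToHom hz) s.snd (hk s)).exists.choose_spec
    haveI := hχlift
    have hψ : p.IsHomLift ((p.map s.fst ≫ eqToHom hz) ≫ u) (s.fst ≫ φ) := by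
      apply IsHomLift.of_fac' p _ _ rfl hx
      simp [hφmap]
    obtain ⟨χ₀, -, huniq⟩ := hφ.2 (p.map s.fst ≫ eqToHom hz) (s.fst ≫ φ) hψ
    have h1 : (hφ'.2 (p.map s.fst ≫ eqToHom hz) s.snd (hk s)).exists.choose ≫ fbar = χ₀ := by
      apply huniq
      refine ⟨IsHomLift.comp_lift_id_right' p _ _ i fbar, ?_⟩
      rw [Category.assoc, hcomm, ← Category.assoc, hχfac, s.condition]
    have h2 : s.fst = χ₀ := by
      apply huniq
      refine ⟨?_, rfl⟩
      apply IsHomLift.of_fac p _ s.fst rfl hz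
      simp
    rw [h1, h2]
  · -- fac₂ : lift ≫ φ' = s.snd
    intro s
    exact (hφ'.2 (p.map s.fst ≫ eqToHom hz) s.snd (hk s)).exists.choose_spec.2
  · -- uniq
    intro s m hm₁ hm₂
    have hlm : p.IsHomLift (p.map s.fst ≫ eqToHom hz) m := by
      apply IsHomLift.of_fac p _ m rfl hz'
      have h1 := congrArg p.map hm₁
      simp only [Functor.map_comp, hfbarmap] at h1
      have h2 := congrArg (fun t => t ≫ eqToHom hz) h1
      simp only [Category.assoc, eqToHom_trans, eqToHom_refl, Category.comp_id,
        Category.id_comp] at h2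
      simp [← h2]
    exact (hφ'.2 (p.map s.fst ≫ eqToHom hz) s.snd (hk s)).unique ⟨hlm, hm₂⟩
      (hφ'.2 (p.map s.fst ≫ eqToHom hz) s.snd (hk s)).exists.choose_spec
end

section
/- Let p : E ⥤ D be a functor, u : i ⟶ j a morphism of D, and f : x ⟶ x' a morphism of E with p f = 𝟙 i. Suppose φ : x ⟶ z and φ' : x' ⟶ z' are p-cocartesian morphisms over u, and let f̄ : z ⟶ z' be the unique morphism with p f̄ = 𝟙 j and φ ≫ f̄ = f ≫ φ'. Then the commuting square with sides f : x ⟶ x', φ : x ⟶ z, φ' : x' ⟶ z', f̄ : z ⟶ z' is a pushout square in E. -/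
open CategoryTheory

/-- `φ` is a (strongly) cocartesian morphism over `u : i ⟶ j` for the functor `p`. -/
def IsCocart {E D : Type*} [Category E] [Category D] (p : E ⥤ D) {i j : D} (u : i ⟶ j)
    {x z : E} (φ : x ⟶ z) : Prop :=
  p.IsHomLift u φ ∧
    ∀ ⦃j' : D⦄ (v : j ⟶ j') ⦃w : E⦄ (ψ : x ⟶ w), p.IsHomLift (u ≫ v) ψ →
      ∃! χ : z ⟶ w, p.IsHomLift v χ ∧ φ ≫ χ = ψ

/-- Cancel a precomposed morphism lying over an identity. -/
lemma lift_of_precomp_id {E D : Type*} [Category E] [Category D] (p : E ⥤ D)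
    {R S : D} {a b c : E} (u : R ⟶ S) (g : a ⟶ b) (l : b ⟶ c)
    (hg : p.IsHomLift (𝟙 R) g) (h : p.IsHomLift u (g ≫ l)) : p.IsHomLift u l := by
  have ha : p.obj a = R := CategoryTheory.IsHomLift.domain_eq p (𝟙 R) g
  have hb : p.obj b = R := CategoryTheory.IsHomLift.codomain_eq p (𝟙 R) g
  have hc : p.obj c = S := CategoryTheory.IsHomLift.codomain_eq p u (g ≫ l)
  have h1 := CategoryTheory.IsHomLift.fac' p (𝟙 R) g
  have h2 := CategoryTheory.IsHomLift.fac' p u (g ≫ l)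
  apply CategoryTheory.IsHomLift.of_fac' p u l hb hc
  calc p.map l = eqToHom hb ≫ eqToHom ha.symm ≫ (p.map g ≫ p.map l) := by
        rw [h1]; simp
    _ = eqToHom hb ≫ eqToHom ha.symm ≫ (eqToHom ha ≫ u ≫ eqToHom hc.symm) := by
        rw [← p.map_comp, h2]
    _ = eqToHom hb ≫ u ≫ eqToHom hc.symm := by simp

/-- **Squares of cocartesian lifts are pushout squares in the total category.**
Let `u : i ⟶ j` be a morphism of `D`, `f : x ⟶ x'` a vertical morphism of `E`
(lying over `𝟙 i`), and let `φ : x ⟶ z`, `φ' : x' ⟶ z'` be `p`-cocartesian morphisms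
over `u`.  If `fbar : z ⟶ z'` is the (unique) morphism lying over `𝟙 j` with
`φ ≫ fbar = f ≫ φ'`, then the square with sides `f`, `φ`, `φ'`, `fbar` is a pushout square
in `E`. -/
theorem cocartesian_lift_square_isPushout {E D : Type*} [Category E] [Category D]
    (p : E ⥤ D) {i j : D} (u : i ⟶ j) {x x' z z' : E}
    (f : x ⟶ x') (hf : p.IsHomLift (𝟙 i) f)
    (φ : x ⟶ z) (φ' : x' ⟶ z')
    (hφ : IsCocart p u φ) (hφ' : IsCocart p u φ')
    (fbar : z ⟶ z') (hfbar : p.IsHomLift (𝟙 j) fbar)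
    (hcomm : φ ≫ fbar = f ≫ φ') :
    IsPushout f φ φ' fbar := by
  obtain ⟨hφl, hφu⟩ := hφ
  obtain ⟨hφ'l, hφ'u⟩ := hφ'
  have hj : p.obj z = j := CategoryTheory.IsHomLift.codomain_eq p u φ
  -- For each cocone (h : x' ⟶ w, k : z ⟶ w with f ≫ h = φ ≫ k), produce data.
  have key : ∀ {w : E} (h : x' ⟶ w) (k : z ⟶ w), f ≫ h = φ ≫ k →
      ∃! l : z' ⟶ w, φ' ≫ l = h ∧ fbar ≫ l = k := by
    intro w h k hw
    set v : j ⟶ p.obj w := eqToHom hj.symm ≫ p.map k with hv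
    have hk : p.IsHomLift v k := by
      apply CategoryTheory.IsHomLift.of_fac' p v k hj rfl
      simp [hv]
    have hφk : p.IsHomLift (u ≫ v) (φ ≫ k) :=
      CategoryTheory.IsHomLift.comp p u v φ k
    have hh : p.IsHomLift (u ≫ v) h := by
      apply lift_of_precomp_id p (u ≫ v) f h hf
      rw [hw]; exact hφk
    obtain ⟨l, ⟨hlv, hlh⟩, hluniq⟩ := hφ'u v h hh
    refine ⟨l, ⟨hlh, ?_⟩, ?_⟩
    · -- fbar ≫ l = k, by uniqueness for φ
      obtain ⟨χ, hχ, hχuniq⟩ := hφu v (φ ≫ k) hφk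
      have h1 : fbar ≫ l = χ := by
        apply hχuniq
        constructor
        · have : p.IsHomLift (𝟙 j ≫ v) (fbar ≫ l) :=
            CategoryTheory.IsHomLift.comp p (𝟙 j) v fbar l
          simpa using this
        · rw [← Category.assoc, hcomm, Category.assoc, hlh, hw]
      have h2 : k = χ := hχuniq k ⟨hk, rfl⟩
      rw [h1, h2]
    · intro l' ⟨hl'h, hl'k⟩
      apply hluniq
      refine ⟨?_, hl'h⟩
      apply lift_of_precomp_id p v fbar l' hfbar
      rw [hl'k]; exact hk
  -- Build the pushout.
  refine IsPushout.of_isColimit (CategoryTheory.Limits.PushoutCocone.IsColimit.mk hcomm.symm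
    (fun s => (key s.inl s.inr s.condition).choose)
    (fun s => (key s.inl s.inr s.condition).choose_spec.1.1)
    (fun s => (key s.inl s.inr s.condition).choose_spec.1.2)
    (fun s m hm1 hm2 => (key s.inl s.inr s.condition).choose_spec.2 m ⟨hm1, hm2⟩))
end

section
/- Let p : E ⥤ D be a cloven Grothendieck fibration, let j : D, and let Q be a commuting square in the fibre category E_j which is a pullback square in E_j. Suppose that for every morphism u : i ⟶ j of D, the reindexing functor u^* : E_j ⥤ E_i sends Q to a pullback square in E_i. Then Q is a pullback square in the total category E. -/
/-!
Given `α : w ⟶ b` and `β : w ⟶ c` with `α ≫ h = β ≫ k`, reindex the square along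
`u := p α : p w ⟶ j`. The universal property of the cartesian lifts turns `α`, `β` into
vertical maps into `u^* b`, `u^* c` forming a cone over the cospan `u^* h`, `u^* k` in the fibre
over `p w`, so they factor uniquely through `u^* a`; composing with the lift `u^* a ⟶ a` gives the
factorisation through `a`. It is unique because any `m` with `m ≫ f = α` lies over `u` (as `f` is
vertical), hence factors vertically through `u^* a`.
-/

open CategoryTheory CategoryTheory.Limits

/-- A morphism in the fibre category `Fiber p j` determined by a morphism of `E`
lying over `𝟙 j`. -/
def fibHom {E D : Type*} [Category E] [Category D] (p : E ⥤ D) {j : D} {a b : E}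
    (ha : p.obj a = j) (hb : p.obj b = j) (f : a ⟶ b) (hf : p.IsHomLift (𝟙 j) f) :
    Functor.Fiber.mk ha ⟶ Functor.Fiber.mk hb :=
  Subtype.mk f hf

open Functor

theorem IsCart.isStronglyCartesian {E D : Type*} [Category E] [Category D] {p : E ⥤ D}
    {i j : D} {u : i ⟶ j} {z x : E} {φ : z ⟶ x} (hφ : IsCart p u φ) :
    p.IsStronglyCartesian u φ where
  toIsHomLift := hφ.1
  universal_property' v ψ _ := hφ.2 v ψ ‹_›

namespace CategoryTheory

theorem Functor.IsHomLift.of_comp_lift_id_right {E D : Type*} [Category E] [Category D]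
    (p : E ⥤ D) {R S : D} (u : R ⟶ S) {a b c : E} (φ : a ⟶ b) (ψ : b ⟶ c)
    [p.IsHomLift (𝟙 S) ψ] [p.IsHomLift u (φ ≫ ψ)] : p.IsHomLift u φ := by
  obtain rfl : p.obj b = S := IsHomLift.domain_eq p (𝟙 S) ψ
  have hψ := IsHomLift.fac' p (𝟙 (p.obj b)) ψ
  refine IsHomLift.of_commsq p u φ (IsHomLift.domain_eq p u (φ ≫ ψ)) rfl ?_
  simpa [hψ] using (IsHomLift.commSq p u (φ ≫ ψ)).w

theorem IsPullback.of_forall_existsUnique {C : Type*} [Category C] {a b c d : C}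
    {f : a ⟶ b} {g : a ⟶ c} {h : b ⟶ d} {k : c ⟶ d} (hcomm : f ≫ h = g ≫ k)
    (H : ∀ ⦃w : C⦄ (α : w ⟶ b) (β : w ⟶ c), α ≫ h = β ≫ k →
      ∃! m : w ⟶ a, m ≫ f = α ∧ m ≫ g = β) :
    IsPullback f g h k :=
  .of_isLimit <| PullbackCone.IsLimit.mk hcomm
    (fun s ↦ (H s.fst s.snd s.condition).exists.choose)
    (fun s ↦ (H s.fst s.snd s.condition).exists.choose_spec.1)
    (fun s ↦ (H s.fst s.snd s.condition).exists.choose_spec.2)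
    (fun s _ hm₁ hm₂ ↦ (H s.fst s.snd s.condition).unique ⟨hm₁, hm₂⟩
      (H s.fst s.snd s.condition).exists.choose_spec)

end CategoryTheory

section Reindexing

variable {E D : Type*} [Category E] [Category D] (p : E ⥤ D)
    {i j : D} (u : i ⟶ j) {x x' y y' : E} (φx : x' ⟶ x) (φy : y' ⟶ y)
    [p.IsHomLift u φx] [p.IsStronglyCartesian u φy] (f : x ⟶ y) [p.IsHomLift (𝟙 j) f]

/-- The morphism `u^* f` between the cartesian lifts `φx`, `φy`. -/
noncomputable def reindexHom : x' ⟶ y' :=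
  IsStronglyCartesian.map p u φy (Category.id_comp u).symm (φx ≫ f)

instance isHomLift_reindexHom : p.IsHomLift (𝟙 i) (reindexHom p u φx φy f) :=
  IsStronglyCartesian.map_isHomLift ..

theorem reindexHom_fac : reindexHom p u φx φy f ≫ φy = φx ≫ f :=
  IsStronglyCartesian.fac ..

end Reindexing

theorem existsUnique_lift_of_isPullback_reindexHom {E D : Type*} [Category E] [Category D]
    (p : E ⥤ D) {j : D} {w a b c d a' b' c' d' : E} (u : p.obj w ⟶ j)
    (φa : a' ⟶ a) (φb : b' ⟶ b) (φc : c' ⟶ c) (φd : d' ⟶ d)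
    [p.IsStronglyCartesian u φa] [p.IsStronglyCartesian u φb]
    [p.IsStronglyCartesian u φc] [p.IsStronglyCartesian u φd]
    (f : a ⟶ b) (g : a ⟶ c) (h : b ⟶ d) (k : c ⟶ d)
    [p.IsHomLift (𝟙 j) f] [p.IsHomLift (𝟙 j) g] [p.IsHomLift (𝟙 j) h] [p.IsHomLift (𝟙 j) k]
    (hQ' : IsPullback (Fiber.homMk p (p.obj w) (reindexHom p u φa φb f))
      (Fiber.homMk p (p.obj w) (reindexHom p u φa φc g))
      (Fiber.homMk p (p.obj w) (reindexHom p u φb φd h))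
      (Fiber.homMk p (p.obj w) (reindexHom p u φc φd k)))
    (α : w ⟶ b) (β : w ⟶ c) [p.IsHomLift u α] [p.IsHomLift u β] (hαβ : α ≫ h = β ≫ k) :
    ∃! m : w ⟶ a, m ≫ f = α ∧ m ≫ g = β := by
  let α' := IsStronglyCartesian.map p u φb (Category.id_comp u).symm α
  let β' := IsStronglyCartesian.map p u φc (Category.id_comp u).symm β
  have hcone : α' ≫ reindexHom p u φb φd h = β' ≫ reindexHom p u φc φd k :=
    IsStronglyCartesian.ext p u φd (𝟙 _) (by simp [α', β', reindexHom_fac, hαβ])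
  let L := hQ'.lift (Fiber.homMk p _ α') (Fiber.homMk p _ β') (Subtype.ext hcone)
  let l : w ⟶ a' := L.1
  have hl₁ : l ≫ reindexHom p u φa φb f = α' := congrArg Subtype.val (hQ'.lift_fst ..)
  have hl₂ : l ≫ reindexHom p u φa φc g = β' := congrArg Subtype.val (hQ'.lift_snd ..)
  refine ⟨l ≫ φa, ⟨?_, ?_⟩, fun m ⟨hm₁, hm₂⟩ ↦ ?_⟩
  · rw [Category.assoc, ← reindexHom_fac p u φa φb f, reassoc_of% hl₁]
    exact IsStronglyCartesian.fac ..
  · rw [Category.assoc, ← reindexHom_fac p u φa φc g, reassoc_of% hl₂]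
    exact IsStronglyCartesian.fac ..
  · have : p.IsHomLift u (m ≫ f) := hm₁ ▸ inferInstance
    have : p.IsHomLift u m := IsHomLift.of_comp_lift_id_right p u m f
    let m' := IsStronglyCartesian.map p u φa (Category.id_comp u).symm m
    have hm'₁ : m' ≫ reindexHom p u φa φb f = α' :=
      IsStronglyCartesian.ext p u φb (𝟙 _) (by simp [m', α', reindexHom_fac, hm₁])
    have hm'₂ : m' ≫ reindexHom p u φa φc g = β' :=
      IsStronglyCartesian.ext p u φc (𝟙 _) (by simp [m', β', reindexHom_fac, hm₂])
    have hm'L : Fiber.homMk p _ m' = L :=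
      hQ'.hom_ext (by rw [hQ'.lift_fst]; exact Subtype.ext hm'₁)
        (by rw [hQ'.lift_snd]; exact Subtype.ext hm'₂)
    rw [show l = m' from congrArg Subtype.val hm'L.symm]
    exact (IsStronglyCartesian.fac ..).symm

theorem fibrewise_pullback_isPullback_general {E D : Type*} [Category E] [Category D]
    (p : E ⥤ D)
    -- `p` is a fibration (and we may choose cartesian lifts, i.e. a cleavage)
    (hfib : ∀ {i j : D} (u : i ⟶ j) (x : E), p.obj x = j →
      ∃ (z : E) (φ : z ⟶ x), IsCart p u φ)
    {j : D} {a b c d : E}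
    (ha : p.obj a = j) (hb : p.obj b = j) (hc : p.obj c = j) (hd : p.obj d = j)
    (f : a ⟶ b) (g : a ⟶ c) (h : b ⟶ d) (k : c ⟶ d)
    (hf : p.IsHomLift (𝟙 j) f) (hg : p.IsHomLift (𝟙 j) g)
    (hh : p.IsHomLift (𝟙 j) h) (hk : p.IsHomLift (𝟙 j) k)
    (hcomm : f ≫ h = g ≫ k)
    -- every reindexing of `Q` is a pullback square in its fibre
    (hre : ∀ {i : D} (u : i ⟶ j) {a' b' c' d' : E}
      (ha' : p.obj a' = i) (hb' : p.obj b' = i) (hc' : p.obj c' = i) (hd' : p.obj d' = i)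
      (φa : a' ⟶ a) (φb : b' ⟶ b) (φc : c' ⟶ c) (φd : d' ⟶ d),
      IsCart p u φa → IsCart p u φb → IsCart p u φc → IsCart p u φd →
      ∀ (f' : a' ⟶ b') (g' : a' ⟶ c') (h' : b' ⟶ d') (k' : c' ⟶ d')
        (hf' : p.IsHomLift (𝟙 i) f') (hg' : p.IsHomLift (𝟙 i) g')
        (hh' : p.IsHomLift (𝟙 i) h') (hk' : p.IsHomLift (𝟙 i) k'),
        f' ≫ φb = φa ≫ f → g' ≫ φc = φa ≫ g →
        h' ≫ φd = φb ≫ h → k' ≫ φd = φc ≫ k →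
        IsPullback (C := Functor.Fiber p i)
          (fibHom p ha' hb' f' hf') (fibHom p ha' hc' g' hg')
          (fibHom p hb' hd' h' hh') (fibHom p hc' hd' k' hk')) :
    -- then `Q` is a pullback square in `E`
    IsPullback f g h k := by
  refine IsPullback.of_forall_existsUnique hcomm fun w α β hαβ ↦ ?_
  let u : p.obj w ⟶ j := p.map α ≫ eqToHom hb
  have : p.IsHomLift u (β ≫ k) := hαβ ▸ inferInstance
  have : p.IsHomLift u β := IsHomLift.of_comp_lift_id_right p u β k
  obtain ⟨a', φa, hφa⟩ := hfib u a ha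
  obtain ⟨b', φb, hφb⟩ := hfib u b hb
  obtain ⟨c', φc, hφc⟩ := hfib u c hc
  obtain ⟨d', φd, hφd⟩ := hfib u d hd
  have := hφa.isStronglyCartesian
  have := hφb.isStronglyCartesian
  have := hφc.isStronglyCartesian
  have := hφd.isStronglyCartesian
  refine existsUnique_lift_of_isPullback_reindexHom p u φa φb φc φd f g h k ?_ α β hαβ
  exact hre u _ _ _ _ φa φb φc φd hφa hφb hφc hφd _ _ _ _ _ _ _ _
    (reindexHom_fac ..) (reindexHom_fac ..) (reindexHom_fac ..) (reindexHom_fac ..)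

/-- **Fibrewise pullbacks stable under reindexing are pullbacks in the total category.**
Let `p : E ⥤ D` be a Grothendieck fibration and let `Q = (f, g, h, k)` be a commuting
square in the fibre over `j` which is a pullback square in the fibre category
`Fiber p j`.  If for every `u : i ⟶ j`, every reindexing of `Q` along `u` (i.e. every
square of morphisms induced between cartesian lifts of `u` at the four corners) is a
pullback square in `Fiber p i`, then `Q` is a pullback square in `E`. -/
theorem fibrewise_pullback_isPullback {E D : Type*} [Category E] [Category D]
    (p : E ⥤ D)
    -- `p` is a fibration (and we may choose cartesian lifts, i.e. a cleavage)
    (hfib : ∀ {i j : D} (u : i ⟶ j) (x : E), p.obj x = j →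
      ∃ (z : E) (φ : z ⟶ x), IsCart p u φ)
    {j : D} {a b c d : E}
    (ha : p.obj a = j) (hb : p.obj b = j) (hc : p.obj c = j) (hd : p.obj d = j)
    (f : a ⟶ b) (g : a ⟶ c) (h : b ⟶ d) (k : c ⟶ d)
    (hf : p.IsHomLift (𝟙 j) f) (hg : p.IsHomLift (𝟙 j) g)
    (hh : p.IsHomLift (𝟙 j) h) (hk : p.IsHomLift (𝟙 j) k)
    (hcomm : f ≫ h = g ≫ k)
    -- `Q` is a pullback square in the fibre over `j`
    (hQ : IsPullback (C := Functor.Fiber p j)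
      (fibHom p ha hb f hf) (fibHom p ha hc g hg)
      (fibHom p hb hd h hh) (fibHom p hc hd k hk))
    -- every reindexing of `Q` is a pullback square in its fibre
    (hre : ∀ {i : D} (u : i ⟶ j) {a' b' c' d' : E}
      (ha' : p.obj a' = i) (hb' : p.obj b' = i) (hc' : p.obj c' = i) (hd' : p.obj d' = i)
      (φa : a' ⟶ a) (φb : b' ⟶ b) (φc : c' ⟶ c) (φd : d' ⟶ d),
      IsCart p u φa → IsCart p u φb → IsCart p u φc → IsCart p u φd →
      ∀ (f' : a' ⟶ b') (g' : a' ⟶ c') (h' : b' ⟶ d') (k' : c' ⟶ d')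
        (hf' : p.IsHomLift (𝟙 i) f') (hg' : p.IsHomLift (𝟙 i) g')
        (hh' : p.IsHomLift (𝟙 i) h') (hk' : p.IsHomLift (𝟙 i) k'),
        f' ≫ φb = φa ≫ f → g' ≫ φc = φa ≫ g →
        h' ≫ φd = φb ≫ h → k' ≫ φd = φc ≫ k →
        IsPullback (C := Functor.Fiber p i)
          (fibHom p ha' hb' f' hf') (fibHom p ha' hc' g' hg')
          (fibHom p hb' hd' h' hh') (fibHom p hc' hd' k' hk')) :
    -- then `Q` is a pullback square in `E`
    IsPullback f g h k :=
  fibrewise_pullback_isPullback_general p hfib ha hb hc hd f g h k hf hg hh hk hcomm hre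
end

section
/- Let C be a category with pullbacks and x : C. Let S_x be the category whose objects are spans (w, p : w ⟶ x, q : w ⟶ d) for varying d : C, and whose morphisms (w,p,q,d) ⟶ (w',p',q',d') are pairs (h : w ⟶ w', u : d ⟶ d') with h ≫ p' = p and q ≫ u = h ≫ q'. Let π : S_x ⥤ C send (w,p,q,d) to d. Then: (1) π is a Grothendieck opfibration, with cocartesian lift of u : d ⟶ d' at (w,p,q) given by (𝟙 w, u) : (w,p,q) ⟶ (w,p,q ≫ u); (2) π is a Grothendieck fibration, with cartesian lift of u : d' ⟶ d ending at (w,p,q) given by the pullback (pullback.fst, u) : (w ×_d d', pullback.fst ≫ p, pullback.snd) ⟶ (w,p,q); (3) π satisfies the Beck–Chevalley condition: for every pullback square in C with sides g̃ : e ⟶ d', f̃ : e ⟶ d'', g : d'' ⟶ d, f : d' ⟶ d (g̃ ≫ f = f̃ ≫ g), and every object z of the fibre over d'', the canonical morphism ν : g̃_! f̃^* z ⟶ f^* g_! z (obtained by factoring f̃^* z ⟶ z ⟶ g_! z through the cocartesian lift f̃^* z ⟶ g̃_! f̃^* z and the cartesian lift f^* g_! z ⟶ g_! z) is an isomorphism.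 -/
open CategoryTheory CategoryTheory.Limits

/-- The category `S_x` of spans out of `x`: objects are spans `(w, p : w ⟶ x, q : w ⟶ d)`,
realised as the comma category `(Over.forget x) ↓ 𝟭 C`, with projection `π` to `C`
remembering only `d`. -/
abbrev SpanCat {C : Type*} [Category C] (x : C) := Comma (Over.forget x) (𝟭 C)

section General

variable {E D : Type*} [Category E] [Category D] {p : E ⥤ D}

lemma IsCart.uniq {i j : D} {u : i ⟶ j} {z x : E} {φ : z ⟶ x} (h : IsCart p u φ)
    {i' : D} {v : i' ⟶ i} {w : E} {χ₁ χ₂ : w ⟶ z}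
    (h₁ : p.IsHomLift v χ₁) (h₂ : p.IsHomLift v χ₂) (heq : χ₁ ≫ φ = χ₂ ≫ φ) : χ₁ = χ₂ := by
  haveI := h₂
  haveI := h.1
  obtain ⟨χ, -, huniq⟩ := h.2 v (χ₂ ≫ φ) inferInstance
  exact (huniq χ₁ ⟨h₁, heq⟩).trans (huniq χ₂ ⟨h₂, rfl⟩).symm

lemma IsCocart.uniq {i j : D} {u : i ⟶ j} {a b : E} {φ : a ⟶ b} (h : IsCocart p u φ)
    {j' : D} {v : j ⟶ j'} {w : E} {χ₁ χ₂ : b ⟶ w}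
    (h₁ : p.IsHomLift v χ₁) (h₂ : p.IsHomLift v χ₂) (heq : φ ≫ χ₁ = φ ≫ χ₂) : χ₁ = χ₂ := by
  haveI := h₂
  haveI := h.1
  obtain ⟨χ, -, huniq⟩ := h.2 v (φ ≫ χ₂) inferInstance
  exact (huniq χ₁ ⟨h₁, heq⟩).trans (huniq χ₂ ⟨h₂, rfl⟩).symm

/-- Comparison iso between two strongly cartesian lifts of the same morphism with the
same codomain. -/
lemma IsCart.comparison {i j : D} {u : i ⟶ j} {z z' x : E} {φ : z ⟶ x} {φ' : z' ⟶ x}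
    (h : IsCart p u φ) (h' : IsCart p u φ') :
    ∃ (θ : z ⟶ z') (θ' : z' ⟶ z), p.IsHomLift (𝟙 i) θ ∧ p.IsHomLift (𝟙 i) θ' ∧
      θ ≫ φ' = φ ∧ θ' ≫ φ = φ' ∧ θ ≫ θ' = 𝟙 z ∧ θ' ≫ θ = 𝟙 z' := by
  haveI := h.1
  haveI := h'.1
  have l1 : p.IsHomLift (𝟙 i ≫ u) φ := by rw [Category.id_comp]; infer_instance
  have l2 : p.IsHomLift (𝟙 i ≫ u) φ' := by rw [Category.id_comp]; infer_instance
  obtain ⟨θ, ⟨hθl, hθc⟩, -⟩ := h'.2 (𝟙 i) φ l1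
  obtain ⟨θ', ⟨hθ'l, hθ'c⟩, -⟩ := h.2 (𝟙 i) φ' l2
  haveI := hθl; haveI := hθ'l
  have lid : p.IsHomLift (𝟙 i) (𝟙 z) := CategoryTheory.IsHomLift.id (IsHomLift.domain_eq p u φ)
  have lid' : p.IsHomLift (𝟙 i) (𝟙 z') := CategoryTheory.IsHomLift.id (IsHomLift.domain_eq p u φ')
  have lcomp : p.IsHomLift (𝟙 i) (θ ≫ θ') := by
    have : p.IsHomLift (𝟙 i ≫ 𝟙 i) (θ ≫ θ') := inferInstance
    rwa [Category.id_comp] at this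
  have lcomp' : p.IsHomLift (𝟙 i) (θ' ≫ θ) := by
    have : p.IsHomLift (𝟙 i ≫ 𝟙 i) (θ' ≫ θ) := inferInstance
    rwa [Category.id_comp] at this
  refine ⟨θ, θ', hθl, hθ'l, hθc, hθ'c, ?_, ?_⟩
  · exact h.uniq lcomp lid (by rw [Category.assoc, hθ'c, hθc, Category.id_comp])
  · exact h'.uniq lcomp' lid' (by rw [Category.assoc, hθc, hθ'c, Category.id_comp])

/-- Comparison iso between two strongly cocartesian lifts of the same morphism with the
same domain. -/
lemma IsCocart.comparison {i j : D} {u : i ⟶ j} {a b b' : E} {φ : a ⟶ b} {φ' : a ⟶ b'}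
    (h : IsCocart p u φ) (h' : IsCocart p u φ') :
    ∃ (θ : b ⟶ b') (θ' : b' ⟶ b), p.IsHomLift (𝟙 j) θ ∧ p.IsHomLift (𝟙 j) θ' ∧
      φ ≫ θ = φ' ∧ φ' ≫ θ' = φ ∧ θ ≫ θ' = 𝟙 b ∧ θ' ≫ θ = 𝟙 b' := by
  haveI := h.1
  haveI := h'.1
  have l1 : p.IsHomLift (u ≫ 𝟙 j) φ := by rw [Category.comp_id]; infer_instance
  have l2 : p.IsHomLift (u ≫ 𝟙 j) φ' := by rw [Category.comp_id]; infer_instance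
  obtain ⟨θ, ⟨hθl, hθc⟩, -⟩ := h.2 (𝟙 j) φ' l2
  obtain ⟨θ', ⟨hθ'l, hθ'c⟩, -⟩ := h'.2 (𝟙 j) φ l1
  haveI := hθl; haveI := hθ'l
  have lid : p.IsHomLift (𝟙 j) (𝟙 b) := CategoryTheory.IsHomLift.id (IsHomLift.codomain_eq p u φ)
  have lid' : p.IsHomLift (𝟙 j) (𝟙 b') := CategoryTheory.IsHomLift.id (IsHomLift.codomain_eq p u φ')
  have lcomp : p.IsHomLift (𝟙 j) (θ ≫ θ') := by
    have : p.IsHomLift (𝟙 j ≫ 𝟙 j) (θ ≫ θ') := inferInstance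
    rwa [Category.id_comp] at this
  have lcomp' : p.IsHomLift (𝟙 j) (θ' ≫ θ) := by
    have : p.IsHomLift (𝟙 j ≫ 𝟙 j) (θ' ≫ θ) := inferInstance
    rwa [Category.id_comp] at this
  refine ⟨θ, θ', hθl, hθ'l, hθc, hθ'c, ?_, ?_⟩
  · exact h.uniq lcomp lid (by rw [← Category.assoc, hθc, hθ'c, Category.comp_id])
  · exact h'.uniq lcomp' lid' (by rw [← Category.assoc, hθ'c, hθc, Category.comp_id])

end General

section General2

variable {E D : Type*} [Category E] [Category D] {p : E ⥤ D}

/-- Transfer an isomorphism of domains through strongly cocartesian lifts. -/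
lemma IsCocart.transfer {i j : D} {u : i ⟶ j} {a a' b b' : E} {ψ : a ⟶ b} {ψ' : a' ⟶ b'}
    (h : IsCocart p u ψ) (h' : IsCocart p u ψ')
    {α : a ⟶ a'} {α' : a' ⟶ a} (hα : p.IsHomLift (𝟙 i) α) (hα' : p.IsHomLift (𝟙 i) α')
    (hαα' : α ≫ α' = 𝟙 a) (hα'α : α' ≫ α = 𝟙 a') :
    ∃ (θ : b ⟶ b') (θ' : b' ⟶ b), p.IsHomLift (𝟙 j) θ ∧ p.IsHomLift (𝟙 j) θ' ∧
      ψ ≫ θ = α ≫ ψ' ∧ ψ' ≫ θ' = α' ≫ ψ ∧ θ ≫ θ' = 𝟙 b ∧ θ' ≫ θ = 𝟙 b' := by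
  haveI := h.1; haveI := h'.1; haveI := hα; haveI := hα'
  have l1 : p.IsHomLift (u ≫ 𝟙 j) (α ≫ ψ') := by
    have : p.IsHomLift (𝟙 i ≫ u) (α ≫ ψ') := inferInstance
    rw [Category.id_comp] at this; rwa [Category.comp_id]
  have l2 : p.IsHomLift (u ≫ 𝟙 j) (α' ≫ ψ) := by
    have : p.IsHomLift (𝟙 i ≫ u) (α' ≫ ψ) := inferInstance
    rw [Category.id_comp] at this; rwa [Category.comp_id]
  obtain ⟨θ, ⟨hθl, hθc⟩, -⟩ := h.2 (𝟙 j) (α ≫ ψ') l1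
  obtain ⟨θ', ⟨hθ'l, hθ'c⟩, -⟩ := h'.2 (𝟙 j) (α' ≫ ψ) l2
  haveI := hθl; haveI := hθ'l
  have lid : p.IsHomLift (𝟙 j) (𝟙 b) := CategoryTheory.IsHomLift.id (IsHomLift.codomain_eq p u ψ)
  have lid' : p.IsHomLift (𝟙 j) (𝟙 b') := CategoryTheory.IsHomLift.id (IsHomLift.codomain_eq p u ψ')
  have lcomp : p.IsHomLift (𝟙 j) (θ ≫ θ') := by
    have : p.IsHomLift (𝟙 j ≫ 𝟙 j) (θ ≫ θ') := inferInstance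
    rwa [Category.id_comp] at this
  have lcomp' : p.IsHomLift (𝟙 j) (θ' ≫ θ) := by
    have : p.IsHomLift (𝟙 j ≫ 𝟙 j) (θ' ≫ θ) := inferInstance
    rwa [Category.id_comp] at this
  refine ⟨θ, θ', hθl, hθ'l, hθc, hθ'c, ?_, ?_⟩
  · refine h.uniq lcomp lid ?_
    rw [← Category.assoc, hθc, Category.assoc, hθ'c, ← Category.assoc, hαα',
      Category.id_comp, Category.comp_id]
  · refine h'.uniq lcomp' lid' ?_
    rw [← Category.assoc, hθ'c, Category.assoc, hθc, ← Category.assoc, hα'α,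
      Category.id_comp, Category.comp_id]

/-- Transfer an isomorphism of codomains through strongly cartesian lifts. -/
lemma IsCart.transfer {i j : D} {u : i ⟶ j} {q q' s s' : E} {φ : q ⟶ s} {φ' : q' ⟶ s'}
    (h : IsCart p u φ) (h' : IsCart p u φ')
    {β : s ⟶ s'} {β' : s' ⟶ s} (hβ : p.IsHomLift (𝟙 j) β) (hβ' : p.IsHomLift (𝟙 j) β')
    (hββ' : β ≫ β' = 𝟙 s) (hβ'β : β' ≫ β = 𝟙 s') :
    ∃ (θ : q ⟶ q') (θ' : q' ⟶ q), p.IsHomLift (𝟙 i) θ ∧ p.IsHomLift (𝟙 i) θ' ∧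
      θ ≫ φ' = φ ≫ β ∧ θ' ≫ φ = φ' ≫ β' ∧ θ ≫ θ' = 𝟙 q ∧ θ' ≫ θ = 𝟙 q' := by
  haveI := h.1; haveI := h'.1; haveI := hβ; haveI := hβ'
  have l1 : p.IsHomLift (𝟙 i ≫ u) (φ ≫ β) := by
    have : p.IsHomLift (u ≫ 𝟙 j) (φ ≫ β) := inferInstance
    rw [Category.comp_id] at this; rwa [Category.id_comp]
  have l2 : p.IsHomLift (𝟙 i ≫ u) (φ' ≫ β') := by
    have : p.IsHomLift (u ≫ 𝟙 j) (φ' ≫ β') := inferInstance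
    rw [Category.comp_id] at this; rwa [Category.id_comp]
  obtain ⟨θ, ⟨hθl, hθc⟩, -⟩ := h'.2 (𝟙 i) (φ ≫ β) l1
  obtain ⟨θ', ⟨hθ'l, hθ'c⟩, -⟩ := h.2 (𝟙 i) (φ' ≫ β') l2
  haveI := hθl; haveI := hθ'l
  have lid : p.IsHomLift (𝟙 i) (𝟙 q) := CategoryTheory.IsHomLift.id (IsHomLift.domain_eq p u φ)
  have lid' : p.IsHomLift (𝟙 i) (𝟙 q') := CategoryTheory.IsHomLift.id (IsHomLift.domain_eq p u φ')
  have lcomp : p.IsHomLift (𝟙 i) (θ ≫ θ') := by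
    have : p.IsHomLift (𝟙 i ≫ 𝟙 i) (θ ≫ θ') := inferInstance
    rwa [Category.id_comp] at this
  have lcomp' : p.IsHomLift (𝟙 i) (θ' ≫ θ) := by
    have : p.IsHomLift (𝟙 i ≫ 𝟙 i) (θ' ≫ θ) := inferInstance
    rwa [Category.id_comp] at this
  refine ⟨θ, θ', hθl, hθ'l, hθc, hθ'c, ?_, ?_⟩
  · refine h.uniq lcomp lid ?_
    rw [Category.assoc, hθ'c, ← Category.assoc, hθc, Category.assoc, hββ',
      Category.comp_id, Category.id_comp]
  · refine h'.uniq lcomp' lid' ?_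
    rw [Category.assoc, hθc, ← Category.assoc, hθ'c, Category.assoc, hβ'β,
      Category.comp_id, Category.id_comp]

/-- A morphism over an identity between a cocartesian pushforward and a cartesian pullback is
determined by its composite with the two lifts. -/
lemma determined {i j k : D} {u : i ⟶ j} {f : j ⟶ k} {a b q' p' : E}
    {ψ : a ⟶ b} {φ' : q' ⟶ p'} (h : IsCocart p u ψ) (h' : IsCart p f φ')
    {μ₁ μ₂ : b ⟶ q'} (l₁ : p.IsHomLift (𝟙 j) μ₁) (l₂ : p.IsHomLift (𝟙 j) μ₂)
    (heq : ψ ≫ μ₁ ≫ φ' = ψ ≫ μ₂ ≫ φ') : μ₁ = μ₂ := by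
  haveI := l₁; haveI := l₂; haveI := h'.1
  have c₁ : p.IsHomLift (𝟙 j ≫ f) (μ₁ ≫ φ') := inferInstance
  have c₂ : p.IsHomLift (𝟙 j ≫ f) (μ₂ ≫ φ') := inferInstance
  have step : μ₁ ≫ φ' = μ₂ ≫ φ' := h.uniq c₁ c₂ heq
  exact h'.uniq l₁ l₂ step

end General2

section Span

variable {C : Type*} [Category C] {x : C}

lemma spanCocart (Z : SpanCat x) {d' : C} (u : Z.right ⟶ d') :
    IsCocart (Comma.snd (Over.forget x) (𝟭 C)) u
      (show Z ⟶ ({ left := Z.left, right := d', hom := Z.hom ≫ u } : SpanCat x) from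
        { left := 𝟙 Z.left
          right := u
          w := by simp }) := by
  set π := Comma.snd (Over.forget x) (𝟭 C)
  constructor
  · exact CategoryTheory.IsHomLift.of_fac π u _ rfl rfl (by simp [π])
  · intro j' v w ψ hψ
    haveI := hψ
    have hb : w.right = j' := CategoryTheory.IsHomLift.codomain_eq π (u ≫ v) ψ
    have hfac : ψ.right = (u ≫ v) ≫ eqToHom hb.symm := by
      have := CategoryTheory.IsHomLift.fac' π (u ≫ v) ψ
      simpa [π] using this
    refine ⟨{ left := ψ.left, right := v ≫ eqToHom hb.symm, w := ?_ }, ⟨?_, ?_⟩, ?_⟩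
    · have := ψ.w
      simp only [Functor.id_obj, Functor.id_map, Over.forget_map] at this ⊢
      rw [this, hfac]
      simp
      exact (Category.assoc _ _ _).symm
    · exact CategoryTheory.IsHomLift.of_fac π v _ rfl hb (by simp [π])
    · apply CommaMorphism.ext
      · simp
      · simp [π, hfac]
    · rintro χ' ⟨hl', hc'⟩
      haveI := hl'
      apply CommaMorphism.ext
      · have := congrArg CommaMorphism.left hc'
        exact (Category.id_comp _).symm.trans this
      · have := CategoryTheory.IsHomLift.fac' π v χ'
        simp at this; exact this

lemma spanCart (Z : SpanCat x) [HasPullbacks C] {d' : C} (u : d' ⟶ Z.right) :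
    IsCart (Comma.snd (Over.forget x) (𝟭 C)) u
      (show ({ left := Over.mk (pullback.fst Z.hom u ≫ Z.left.hom),
               right := d',
               hom := pullback.snd Z.hom u } : SpanCat x) ⟶ Z from
        { left := Over.homMk (pullback.fst Z.hom u) rfl
          right := u
          w := by simpa using pullback.condition }) := by
  set π := Comma.snd (Over.forget x) (𝟭 C)
  constructor
  · exact CategoryTheory.IsHomLift.of_fac π u _ rfl rfl (by simp [π])
  · intro i' v w ψ hψ
    haveI := hψ
    have ha : w.right = i' := CategoryTheory.IsHomLift.domain_eq π (v ≫ u) ψ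
    have hfac : ψ.right = eqToHom ha ≫ v ≫ u := by
      have := CategoryTheory.IsHomLift.fac' π (v ≫ u) ψ
      simpa [π] using this
    have hcond : ψ.left.left ≫ Z.hom = (w.hom ≫ eqToHom ha ≫ v) ≫ u := by
      have := ψ.w
      simp only [Functor.id_obj, Functor.id_map, Over.forget_map] at this
      exact this.trans (by rw [hfac, Category.assoc, Category.assoc])
    refine ⟨{ left := Over.homMk (pullback.lift ψ.left.left (w.hom ≫ eqToHom ha ≫ v) hcond)
                (by exact (pullback.lift_fst_assoc _ _ _ _).trans (Over.w ψ.left)),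
              right := eqToHom ha ≫ v, w := ?_ }, ⟨?_, ?_⟩, ?_⟩
    · exact pullback.lift_snd _ _ _
    · exact CategoryTheory.IsHomLift.of_fac π v _ ha rfl (by simp [π])
    · apply CommaMorphism.ext
      · ext
        exact pullback.lift_fst _ _ _
      · simp [π, hfac]
    · rintro χ' ⟨hl', hc'⟩
      haveI := hl'
      have hr' : χ'.right = eqToHom ha ≫ v := by
        have := CategoryTheory.IsHomLift.fac' π v χ'
        simp at this; exact this
      apply CommaMorphism.ext
      · ext
        apply pullback.hom_ext
        · have := congrArg CommaMorphism.left hc'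
          have h2 := congrArg CommaMorphism.left (congrArg CommaMorphism.left hc')
          exact h2.trans (pullback.lift_fst _ _ _).symm
        · have := χ'.w
          simp only [Functor.id_obj, Functor.id_map, Over.forget_map] at this
          exact this.trans ((congrArg (w.hom ≫ ·) hr').trans (pullback.lift_snd _ _ _).symm)
      · simp [hr']

end Span

/-- **The universal span `S_x → C` is a bi-Cartesian fibration with base change.**
Let `C` have pullbacks and `x : C`; let `π : S_x ⥤ C` be the projection.
(1) `π` is a Grothendieck opfibration: postcomposition `(𝟙 w, u)` is a cocartesian lift.
(2) `π` is a Grothendieck fibration: pullback `(pullback.fst, u)` is a cartesian lift.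
(3) `π` satisfies the Beck–Chevalley condition: for every pullback square
`g̃ ≫ f = f̃ ≫ g` in `C` and every object of the fibre, the canonical comparison
`ν : g̃_! f̃^* z ⟶ f^* g_! z` (lying over an identity and compatible with the four lifts)
is an isomorphism. -/
theorem universal_span_biCartesian_baseChange {C : Type*} [Category C] [HasPullbacks C]
    (x : C) :
    -- (1) cocartesian lifts by postcomposition
    (∀ (Z : SpanCat x) {d' : C} (u : Z.right ⟶ d'),
      IsCocart (Comma.snd (Over.forget x) (𝟭 C)) u
        (show Z ⟶ ({ left := Z.left, right := d', hom := Z.hom ≫ u } : SpanCat x) from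
          { left := 𝟙 Z.left
            right := u
            w := by simp })) ∧
    -- (2) cartesian lifts by pullback
    (∀ (Z : SpanCat x) {d' : C} (u : d' ⟶ Z.right),
      IsCart (Comma.snd (Over.forget x) (𝟭 C)) u
        (show ({ left := Over.mk (pullback.fst Z.hom u ≫ Z.left.hom),
                 right := d',
                 hom := pullback.snd Z.hom u } : SpanCat x) ⟶ Z from
          { left := Over.homMk (pullback.fst Z.hom u) rfl
            right := u
            w := by simpa using pullback.condition })) ∧
    -- (3) the Beck–Chevalley condition
    (∀ {e d' d'' d : C} (gt : e ⟶ d') (ft : e ⟶ d'') (g : d'' ⟶ d) (f : d' ⟶ d),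
      IsPullback gt ft f g →
      ∀ (z A B P Q : SpanCat x)
        (phiFt : A ⟶ z) (_ : IsCart (Comma.snd (Over.forget x) (𝟭 C)) ft phiFt)
        (psiGt : A ⟶ B) (_ : IsCocart (Comma.snd (Over.forget x) (𝟭 C)) gt psiGt)
        (psiG : z ⟶ P) (_ : IsCocart (Comma.snd (Over.forget x) (𝟭 C)) g psiG)
        (phiF : Q ⟶ P) (_ : IsCart (Comma.snd (Over.forget x) (𝟭 C)) f phiF)
        (ν : B ⟶ Q),
        (Comma.snd (Over.forget x) (𝟭 C)).IsHomLift (𝟙 d') ν →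
        psiGt ≫ ν ≫ phiF = phiFt ≫ psiG →
        IsIso ν) := by
  refine ⟨fun Z _ u => spanCocart Z u, fun Z _ u => spanCart Z u, ?_⟩
  intro e d' d'' d gt ft g f hpb z A B P Q phiFt hcFt psiGt hcGt psiG hcG phiF hcF ν hν hcomm
  set π := Comma.snd (Over.forget x) (𝟭 C) with hπ
  haveI := hcFt.1; haveI := hcGt.1; haveI := hcG.1; haveI := hcF.1; haveI := hν
  -- identify the base objects with the `right` components
  have h1 : z.right = d'' := CategoryTheory.IsHomLift.domain_eq π g psiG
  subst h1
  have h2 : P.right = d := CategoryTheory.IsHomLift.codomain_eq π g psiG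
  subst h2
  have h3 : A.right = e := CategoryTheory.IsHomLift.domain_eq π ft phiFt
  subst h3
  have h4 : Q.right = d' := CategoryTheory.IsHomLift.domain_eq π f phiF
  subst h4
  -- the explicit models
  let Ae : SpanCat x :=
    { left := Over.mk (pullback.fst z.hom ft ≫ z.left.hom), right := A.right
      hom := pullback.snd z.hom ft }
  let φFt : Ae ⟶ z :=
    { left := Over.homMk (pullback.fst z.hom ft) rfl, right := ft
      w := pullback.condition }
  have hφFt : IsCart π ft φFt := spanCart z ft
  let Be : SpanCat x := { left := Ae.left, right := Q.right, hom := Ae.hom ≫ gt }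
  let ψGt : Ae ⟶ Be := { left := 𝟙 Ae.left, right := gt, w := Category.id_comp _ }
  have hψGt : IsCocart π gt ψGt := spanCocart Ae gt
  let Pe : SpanCat x := { left := z.left, right := P.right, hom := z.hom ≫ g }
  let ψG : z ⟶ Pe := { left := 𝟙 z.left, right := g, w := Category.id_comp _ }
  have hψG : IsCocart π g ψG := spanCocart z g
  let Qe : SpanCat x :=
    { left := Over.mk (pullback.fst (z.hom ≫ g) f ≫ z.left.hom), right := Q.right
      hom := pullback.snd (z.hom ≫ g) f }
  let φF : Qe ⟶ Pe :=
    { left := Over.homMk (pullback.fst (z.hom ≫ g) f) rfl, right := f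
      w := pullback.condition }
  have hφF : IsCart π f φF := spanCart Pe f
  -- the pasted pullback square
  have key : IsPullback (pullback.fst z.hom ft) (pullback.snd z.hom ft ≫ gt) (z.hom ≫ g) f :=
    (IsPullback.of_hasPullback z.hom ft).paste_vert hpb.flip
  -- the explicit comparison morphism
  let l : pullback z.hom ft ⟶ pullback (z.hom ≫ g) f :=
    pullback.lift (pullback.fst z.hom ft) (pullback.snd z.hom ft ≫ gt) key.w
  let ν' : Be ⟶ Qe :=
    { left := Over.homMk l (pullback.lift_fst_assoc _ _ _ _), right := 𝟙 Q.right,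
      w := (pullback.lift_snd _ _ _).trans (Category.comp_id _).symm }
  have hν'lift : π.IsHomLift (𝟙 Q.right) ν' :=
    CategoryTheory.IsHomLift.of_fac π _ _ rfl rfl (by simp [π, ν'])
  have hν'comm : ψGt ≫ ν' ≫ φF = φFt ≫ ψG := by
    apply CommaMorphism.ext
    · ext
      simp [ψGt, ν', φF, φFt, ψG, l]
      exact pullback.lift_fst _ _ _
    · simp [ψGt, ν', φF, φFt, ψG]
      exact (congrArg (gt ≫ ·) (Category.id_comp f)).trans hpb.w
  -- ν' is an isomorphism
  have hliso : IsIso l := by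
    have hl : l = key.isoPullback.hom := by
      apply pullback.hom_ext
      · exact (pullback.lift_fst _ _ _).trans key.isoPullback_hom_fst.symm
      · exact (pullback.lift_snd _ _ _).trans key.isoPullback_hom_snd.symm
    rw [hl]; infer_instance
  haveI : IsIso ((Over.forget x).map ν'.left) := hliso
  haveI : IsIso ν'.left := isIso_of_reflects_iso ν'.left (Over.forget x)
  haveI : IsIso ν'.right := inferInstanceAs (IsIso (𝟙 Q.right))
  have hν'iso : IsIso ν' := by
    have : ν' = (Comma.isoMk (asIso ν'.left) (asIso ν'.right) ν'.w).hom := rfl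
    rw [this]; infer_instance
  -- comparison isomorphisms between abstract and explicit lifts
  obtain ⟨α, α', hα, hα', hαc, hα'c, hαα', hα'α⟩ := hcFt.comparison hφFt
  obtain ⟨β, β', hβ, hβ', hβc, hβ'c, hββ', hβ'β⟩ := hcG.comparison hψG
  obtain ⟨θB, θB', hθB, hθB', hθBc, hθB'c, hθBB', hθB'B⟩ := hcGt.transfer hψGt hα hα' hαα' hα'α
  obtain ⟨θQ, θQ', hθQ, hθQ', hθQc, hθQ'c, hθQQ', hθQ'Q⟩ := hcF.transfer hφF hβ hβ' hββ' hβ'β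
  -- the two composites agree
  have hsq : ν ≫ θQ = θB ≫ ν' := by
    haveI := hθQ; haveI := hθB
    have l₁ : π.IsHomLift (𝟙 Q.right) (ν ≫ θQ) := by
      have : π.IsHomLift (𝟙 Q.right ≫ 𝟙 Q.right) (ν ≫ θQ) := inferInstance
      rwa [Category.id_comp] at this
    have l₂ : π.IsHomLift (𝟙 Q.right) (θB ≫ ν') := by
      haveI := hν'lift
      have : π.IsHomLift (𝟙 Q.right ≫ 𝟙 Q.right) (θB ≫ ν') := inferInstance
      rwa [Category.id_comp] at this
    refine determined hcGt hφF l₁ l₂ ?_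
    calc psiGt ≫ (ν ≫ θQ) ≫ φF = (psiGt ≫ ν ≫ phiF) ≫ β := by
          rw [Category.assoc, hθQc]; simp only [Category.assoc]
      _ = phiFt ≫ ψG := by rw [hcomm, Category.assoc, hβc]
      _ = (α ≫ φFt) ≫ ψG := by rw [hαc]
      _ = psiGt ≫ (θB ≫ ν') ≫ φF := by
          simp only [← Category.assoc]
          rw [hθBc]
          simp only [Category.assoc]
          rw [hν'comm]
  have hν : ν = θB ≫ ν' ≫ θQ' := by
    have : ν ≫ θQ ≫ θQ' = θB ≫ ν' ≫ θQ' := by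
      rw [← Category.assoc, hsq, Category.assoc]
    rwa [hθQQ', Category.comp_id] at this
  rw [hν]
  haveI : IsIso θB := ⟨θB', hθBB', hθB'B⟩
  haveI : IsIso θQ' := ⟨θQ, hθQ'Q, hθQQ'⟩
  haveI := hν'iso
  infer_instance
end
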